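/- arXiv:1805.05173 — 3 statements merged into one kernel-verified Lean document; each statement's English description precedes it below -/
import Mathlib

section
/- For θ ∈ (0, π/2) and any point (x,y) with |x| < (π/2)secθ and y ≠ 0, the function u(x,y) = -sec²θ·log(cos(x/secθ)) + tan²θ·log(cosh(|y|/tanθ)) satisfies (1+|Du|²)^{3/2}·H[u] ≥ 1 + |Du|², where H[u] = div(Du/√(1+|Du|²)); in particular H[u] ≥ 1/√(1+|Du|²), i.e. u is a subsolution of the graphical translator equation. -/
/-!
The function is axially symmetric, `u(q) = A(x) + B(r)` with `x = ⟪e, q⟫`, `y = q - x e` and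
`r = ‖y‖`. Its gradient is `G = a(x) e + (b(r) / r) y` with `a = A'`, `b = B'`, and its Hessian
has eigenvalue `a'` on `e`, `b'` on `y` and `b / r` on the remaining `n - 2` directions. For any
vector field, `(1 + |G|²)^{3/2} div (G / √(1 + |G|²)) = (1 + |G|²) tr DG - ⟪DG G, G⟫`. Here the
profiles `a = tan (x cos θ) / cos θ` and `b = tan θ · tanh (r / tan θ)` satisfy the Riccati
equations `a' = 1 + cos² θ · a²` and `b' = 1 - b² / tan² θ`, and because
`cos² θ (1 + tan² θ) = 1` the right-hand side minus `1 + |G|²` is exactly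
`a' b' + (n - 2) (b / r) (1 + |G|²) ≥ 0`.
-/

open Real
open scoped RealInnerProductSpace

/-- The Euclidean divergence of a vector field `F` at `p`:
`div F (p) = ∑ i ⟨∂F/∂eᵢ (p), eᵢ⟩`. -/
noncomputable def eDiv {m : ℕ} (F : EuclideanSpace ℝ (Fin m) → EuclideanSpace ℝ (Fin m))
    (p : EuclideanSpace ℝ (Fin m)) : ℝ :=
  ∑ i : Fin m, ⟪fderiv ℝ F p (EuclideanSpace.single i 1), EuclideanSpace.single i 1⟫

open InnerProductSpace

section Axial

variable {E : Type*} [NormedAddCommGroup E] [InnerProductSpace ℝ E]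

theorem hasFDerivAt_norm_of_ne_zero {x : E} (hx : x ≠ 0) :
    HasFDerivAt (fun y : E => ‖y‖) (‖x‖⁻¹ • innerSL ℝ x) x := by
  have hx' : ‖x‖ ≠ 0 := norm_ne_zero_iff.2 hx
  have h : HasFDerivAt (fun y : E => √(‖y‖ ^ 2)) ((1 / (2 * √(‖x‖ ^ 2))) • 2 • innerSL ℝ x) x :=
    (Real.hasDerivAt_sqrt (pow_ne_zero 2 hx')).comp_hasFDerivAt x
      (hasStrictFDerivAt_norm_sq x).hasFDerivAt
  simp only [Real.sqrt_sq (norm_nonneg _)] at h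
  refine h.congr_fderiv ?_
  ext v
  simp only [smul_apply, innerSL_apply_apply, smul_eq_mul, two_smul, add_apply]
  field_simp
  ring

noncomputable def projPerp (e : E) : E →L[ℝ] E := ContinuousLinearMap.id ℝ E - rankOne ℝ e e

variable {e : E}

theorem projPerp_apply (q : E) : projPerp e q = q - ⟪e, q⟫ • e := rfl

theorem inner_projPerp (he : ‖e‖ = 1) (q : E) : ⟪e, projPerp e q⟫ = 0 := by
  simp [projPerp_apply, inner_sub_right, inner_smul_right, he]

theorem inner_projPerp_projPerp (he : ‖e‖ = 1) (q v : E) :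
    ⟪projPerp e q, projPerp e v⟫ = ⟪projPerp e q, v⟫ := by
  rw [projPerp_apply v, inner_sub_right, inner_smul_right, real_inner_comm e,
    inner_projPerp he, mul_zero, sub_zero]

noncomputable def axialField (e : E) (a b : ℝ → ℝ) (q : E) : E :=
  a ⟪e, q⟫ • e + (b ‖projPerp e q‖ / ‖projPerp e q‖) • projPerp e q

theorem hasGradientAt_axial [CompleteSpace E] (he : ‖e‖ = 1) {A B a b : ℝ → ℝ} {q : E}
    (hA : HasDerivAt A (a ⟪e, q⟫) ⟪e, q⟫)
    (hB : HasDerivAt B (b ‖projPerp e q‖) ‖projPerp e q‖) (hq : projPerp e q ≠ 0) :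
    HasGradientAt (fun q => A ⟪e, q⟫ + B ‖projPerp e q‖) (axialField e a b q) q := by
  have hx : HasFDerivAt (fun q : E => ⟪e, q⟫) (innerSL ℝ e) q := (innerSL ℝ e).hasFDerivAt
  have hr : HasFDerivAt (fun q => ‖projPerp e q‖)
      ((‖projPerp e q‖⁻¹ • innerSL ℝ (projPerp e q)).comp (projPerp e)) q :=
    (hasFDerivAt_norm_of_ne_zero hq).comp q (projPerp e).hasFDerivAt
  rw [hasGradientAt_iff_hasFDerivAt]
  refine ((hA.comp_hasFDerivAt q hx).add (hB.comp_hasFDerivAt q hr)).congr_fderiv ?_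
  ext v
  simp only [add_apply, smul_apply, ContinuousLinearMap.comp_apply, innerSL_apply_apply,
    smul_eq_mul, toDual_apply_apply, axialField, inner_add_left, real_inner_smul_left,
    inner_projPerp_projPerp he]
  ring

theorem gradient_eventuallyEq_axialField [CompleteSpace E] (he : ‖e‖ = 1) {A B a b : ℝ → ℝ}
    {p : E} (hA : ∀ᶠ x in nhds ⟪e, p⟫, HasDerivAt A (a x) x)
    (hB : ∀ᶠ r in nhds ‖projPerp e p‖, HasDerivAt B (b r) r) (hp : projPerp e p ≠ 0) :
    gradient (fun q => A ⟪e, q⟫ + B ‖projPerp e q‖) =ᶠ[nhds p] axialField e a b := by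
  have hx := ((innerSL ℝ e).continuous.tendsto p).eventually hA
  have hr := ((projPerp e).continuous.norm.tendsto p).eventually hB
  have hne := (projPerp e).continuous.continuousAt.eventually_ne hp
  filter_upwards [hx, hr, hne] with q hqA hqB hq
  exact (hasGradientAt_axial he hqA hqB hq).gradient

/-- The self-adjoint operator acting as `α` on `e`, as `β` on `y` and as `φ` on `{e, y}ᗮ`. -/
noncomputable def axialHessian (e y : E) (α β φ : ℝ) : E →L[ℝ] E :=
  α • rankOne ℝ e e + φ • projPerp e + ((β - φ) / ‖y‖ ^ 2) • rankOne ℝ y y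

theorem hasFDerivAt_axialField (he : ‖e‖ = 1) {a b : ℝ → ℝ} {a' b' : ℝ} {q : E}
    (ha : HasDerivAt a a' ⟪e, q⟫) (hb : HasDerivAt b b' ‖projPerp e q‖) (hq : projPerp e q ≠ 0) :
    HasFDerivAt (axialField e a b)
      (axialHessian e (projPerp e q) a' b' (b ‖projPerp e q‖ / ‖projPerp e q‖)) q := by
  have hr0 : ‖projPerp e q‖ ≠ 0 := norm_ne_zero_iff.2 hq
  have hx : HasFDerivAt (fun q : E => ⟪e, q⟫) (innerSL ℝ e) q := (innerSL ℝ e).hasFDerivAt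
  have hr := (hasFDerivAt_norm_of_ne_zero hq).comp q (projPerp e).hasFDerivAt
  have hφ := (hb.div (hasDerivAt_id _) hr0).comp_hasFDerivAt q hr
  refine (((ha.comp_hasFDerivAt q hx).smul_const e).add
    (hφ.smul (projPerp e).hasFDerivAt)).congr_fderiv ?_
  ext v
  simp only [axialHessian, add_apply, smul_apply, ContinuousLinearMap.comp_apply,
    ContinuousLinearMap.smulRight_apply, innerSL_apply_apply, rankOne_apply, id,
    Function.comp_apply, Pi.div_apply, inner_projPerp_projPerp he]
  generalize ‖projPerp e q‖ = r at hr0 ⊢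
  match_scalars <;> simp only [smul_eq_mul] <;> field_simp

theorem trace_axialHessian [FiniteDimensional ℝ E] (he : ‖e‖ = 1) {y : E} (hy : y ≠ 0)
    (α β φ : ℝ) :
    LinearMap.trace ℝ E (axialHessian e y α β φ).toLinearMap =
      α + β + (Module.finrank ℝ E - 2) * φ := by
  have hy' : ‖y‖ ≠ 0 := norm_ne_zero_iff.2 hy
  simp only [axialHessian, projPerp, ContinuousLinearMap.toLinearMap_add,
    ContinuousLinearMap.toLinearMap_sub, ContinuousLinearMap.toLinearMap_smul, map_add, map_sub,
    map_smul, ContinuousLinearMap.coe_id, LinearMap.trace_id, trace_rankOne,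
    real_inner_self_eq_norm_sq, he, smul_eq_mul]
  field_simp
  ring

theorem axialHessian_apply (he : ‖e‖ = 1) {y : E} (hy : ⟪e, y⟫ = 0) (hy0 : y ≠ 0)
    (α β φ a c : ℝ) :
    axialHessian e y α β φ (a • e + c • y) = (α * a) • e + (β * c) • y := by
  have hy' : ‖y‖ ≠ 0 := norm_ne_zero_iff.2 hy0
  simp only [axialHessian, add_apply, smul_apply, rankOne_apply, projPerp_apply, inner_add_right,
    inner_smul_right, real_inner_self_eq_norm_sq, he, hy, real_inner_comm e y]
  match_scalars <;> field_simp <;> ring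

theorem norm_sq_add_smul_of_inner_eq_zero (he : ‖e‖ = 1) {y : E} (hy : ⟪e, y⟫ = 0) (a c : ℝ) :
    ‖a • e + c • y‖ ^ 2 = a ^ 2 + c ^ 2 * ‖y‖ ^ 2 := by
  rw [norm_add_sq_real, norm_smul, norm_smul, inner_smul_left, inner_smul_right, hy]
  simp [he, mul_pow]

variable {a b : ℝ → ℝ} {q : E}

theorem norm_axialField_sq (he : ‖e‖ = 1) (hq : projPerp e q ≠ 0) :
    ‖axialField e a b q‖ ^ 2 = a ⟪e, q⟫ ^ 2 + b ‖projPerp e q‖ ^ 2 := by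
  have hr : ‖projPerp e q‖ ≠ 0 := norm_ne_zero_iff.2 hq
  rw [axialField, norm_sq_add_smul_of_inner_eq_zero he (inner_projPerp he q)]
  field_simp

theorem one_add_norm_sq_mul_trace_sub_inner_axialField [FiniteDimensional ℝ E] (he : ‖e‖ = 1)
    (hq : projPerp e q ≠ 0) (α β : ℝ) :
    (1 + ‖axialField e a b q‖ ^ 2) * LinearMap.trace ℝ E
        (axialHessian e (projPerp e q) α β (b ‖projPerp e q‖ / ‖projPerp e q‖)).toLinearMap -
      ⟪axialHessian e (projPerp e q) α β (b ‖projPerp e q‖ / ‖projPerp e q‖)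
        (axialField e a b q), axialField e a b q⟫ =
    (1 + (a ⟪e, q⟫ ^ 2 + b ‖projPerp e q‖ ^ 2)) *
        (α + β + (Module.finrank ℝ E - 2) * (b ‖projPerp e q‖ / ‖projPerp e q‖)) -
      (α * a ⟪e, q⟫ ^ 2 + β * b ‖projPerp e q‖ ^ 2) := by
  have hr : ‖projPerp e q‖ ≠ 0 := norm_ne_zero_iff.2 hq
  have hy := inner_projPerp he q
  rw [norm_axialField_sq he hq, trace_axialHessian he hq, axialField,
    axialHessian_apply he hy hq]
  simp only [inner_add_left, inner_add_right, real_inner_smul_left, real_inner_smul_right,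
    real_inner_self_eq_norm_sq, he, hy, real_inner_comm e (projPerp e q)]
  field_simp
  ring

end Axial

section Normalized

variable {E : Type*} [NormedAddCommGroup E] [InnerProductSpace ℝ E]

theorem ContinuousLinearMap.trace_smulRight [FiniteDimensional ℝ E] (f : E →L[ℝ] ℝ) (x : E) :
    LinearMap.trace ℝ E (f.smulRight x) = f x :=
  LinearMap.trace_smulRight (f : E →ₗ[ℝ] ℝ) x

theorem hasFDerivAt_inv_sqrt_one_add_norm_sq_smul {G : E → E} {G' : E →L[ℝ] E} {p : E}
    (hG : HasFDerivAt G G' p) :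
    HasFDerivAt (fun q => (√(1 + ‖G q‖ ^ 2))⁻¹ • G q)
      ((√(1 + ‖G p‖ ^ 2))⁻¹ • G' -
        ((√(1 + ‖G p‖ ^ 2) ^ 3)⁻¹ • (innerSL ℝ (G p)).comp G').smulRight (G p)) p := by
  have hpos : 0 < 1 + ‖G p‖ ^ 2 := by positivity
  have hS : 0 < √(1 + ‖G p‖ ^ 2) := Real.sqrt_pos.2 hpos
  have hψ := ((Real.hasDerivAt_sqrt hpos.ne').inv hS.ne').comp_hasFDerivAt p
    (hG.norm_sq.const_add 1)
  refine (hψ.smul hG).congr_fderiv ?_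
  ext v
  simp only [add_apply, sub_apply, smul_apply, ContinuousLinearMap.comp_apply,
    ContinuousLinearMap.smulRight_apply, innerSL_apply_apply, Function.comp_apply, Pi.inv_apply]
  match_scalars
  · ring
  · simp only [smul_eq_mul, nsmul_eq_mul, Nat.cast_ofNat]
    field_simp

end Normalized

theorem eDiv_eq_trace {m : ℕ} (F : EuclideanSpace ℝ (Fin m) → EuclideanSpace ℝ (Fin m))
    (p : EuclideanSpace ℝ (Fin m)) :
    eDiv F p = LinearMap.trace ℝ _ (fderiv ℝ F p).toLinearMap := by
  classical
  rw [LinearMap.trace_eq_sum_inner _ (EuclideanSpace.basisFun (Fin m) ℝ), eDiv]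
  simp [EuclideanSpace.basisFun_apply, real_inner_comm]

theorem eDiv_inv_sqrt_one_add_norm_sq_smul {m : ℕ}
    {G : EuclideanSpace ℝ (Fin m) → EuclideanSpace ℝ (Fin m)}
    {G' : EuclideanSpace ℝ (Fin m) →L[ℝ] EuclideanSpace ℝ (Fin m)} {p : EuclideanSpace ℝ (Fin m)}
    (hG : HasFDerivAt G G' p) :
    eDiv (fun q => (√(1 + ‖G q‖ ^ 2))⁻¹ • G q) p =
      ((1 + ‖G p‖ ^ 2) * LinearMap.trace ℝ _ G'.toLinearMap - ⟪G' (G p), G p⟫) /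
        √(1 + ‖G p‖ ^ 2) ^ 3 := by
  have hS2 : √(1 + ‖G p‖ ^ 2) ^ 2 = 1 + ‖G p‖ ^ 2 := Real.sq_sqrt (by positivity)
  have hS : 0 < √(1 + ‖G p‖ ^ 2) := Real.sqrt_pos.2 (by positivity)
  rw [eDiv_eq_trace, (hasFDerivAt_inv_sqrt_one_add_norm_sq_smul hG).fderiv,
    ContinuousLinearMap.toLinearMap_sub, map_sub, ContinuousLinearMap.toLinearMap_smul, map_smul,
    ContinuousLinearMap.trace_smulRight]
  simp only [smul_apply, ContinuousLinearMap.comp_apply, innerSL_apply_apply, smul_eq_mul,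
    real_inner_comm (G p)]
  generalize √(1 + ‖G p‖ ^ 2) = S at hS hS2 ⊢
  rw [← hS2]
  field_simp

theorem Filter.EventuallyEq.eDiv_eq {m : ℕ}
    {F F' : EuclideanSpace ℝ (Fin m) → EuclideanSpace ℝ (Fin m)} {p : EuclideanSpace ℝ (Fin m)}
    (h : F =ᶠ[nhds p] F') : eDiv F p = eDiv F' p := by
  simp only [eDiv, h.fderiv_eq]

theorem inv_sqrt_le_eDiv_of_le {m : ℕ}
    {G : EuclideanSpace ℝ (Fin m) → EuclideanSpace ℝ (Fin m)}
    {G' : EuclideanSpace ℝ (Fin m) →L[ℝ] EuclideanSpace ℝ (Fin m)} {p : EuclideanSpace ℝ (Fin m)}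
    (hG : HasFDerivAt G G' p)
    (h : 1 + ‖G p‖ ^ 2 ≤ (1 + ‖G p‖ ^ 2) * LinearMap.trace ℝ _ G'.toLinearMap - ⟪G' (G p), G p⟫) :
    (√(1 + ‖G p‖ ^ 2))⁻¹ ≤ eDiv (fun q => (√(1 + ‖G q‖ ^ 2))⁻¹ • G q) p := by
  have hS2 : √(1 + ‖G p‖ ^ 2) ^ 2 = 1 + ‖G p‖ ^ 2 := Real.sq_sqrt (by positivity)
  have hS : 0 < √(1 + ‖G p‖ ^ 2) := Real.sqrt_pos.2 (by positivity)
  rw [eDiv_inv_sqrt_one_add_norm_sq_smul hG, le_div_iff₀ (pow_pos hS 3)]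
  calc (√(1 + ‖G p‖ ^ 2))⁻¹ * √(1 + ‖G p‖ ^ 2) ^ 3 = √(1 + ‖G p‖ ^ 2) ^ 2 := by field_simp
    _ = 1 + ‖G p‖ ^ 2 := hS2
    _ ≤ _ := h

section Coordinates

variable {m : ℕ}

theorem projPerp_single_apply (i j : Fin m) (q : EuclideanSpace ℝ (Fin m)) :
    projPerp (EuclideanSpace.single i 1) q j = if j = i then 0 else q j := by
  by_cases h : j = i
  · subst h; simp [projPerp_apply, EuclideanSpace.inner_single_left]
  · simp [projPerp_apply, h]

theorem norm_projPerp_single_sq (i : Fin m) (q : EuclideanSpace ℝ (Fin m)) :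
    ‖projPerp (EuclideanSpace.single i 1) q‖ ^ 2 = ∑ j, if j = i then 0 else q j ^ 2 := by
  rw [EuclideanSpace.norm_sq_eq]
  refine Finset.sum_congr rfl fun j _ => ?_
  rw [projPerp_single_apply]
  split_ifs <;> simp

theorem projPerp_single_ne_zero {i j : Fin m} (hji : j ≠ i) {q : EuclideanSpace ℝ (Fin m)}
    (hq : q j ≠ 0) : projPerp (EuclideanSpace.single i 1) q ≠ 0 := fun h => by
  have := projPerp_single_apply i j q
  rw [h, if_neg hji] at this
  exact hq this.symm

theorem norm_projPerp_single_zero (hm : 0 < m) (q : EuclideanSpace ℝ (Fin m)) :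
    ‖projPerp (EuclideanSpace.single ⟨0, hm⟩ 1) q‖ =
      √(∑ j : Fin m, if (j : ℕ) = 0 then 0 else q j ^ 2) := by
  rw [← sqrt_sq (norm_nonneg (projPerp (EuclideanSpace.single ⟨0, hm⟩ 1) q)),
    norm_projPerp_single_sq]
  simp only [Fin.ext_iff]

end Coordinates

section Profiles

variable {c t : ℝ}

noncomputable def reaperProfile (c x : ℝ) : ℝ := -(1 / c) ^ 2 * log (cos (x * c))

noncomputable def reaperSlope (c x : ℝ) : ℝ := tan (x * c) / c

noncomputable def coshProfile (t r : ℝ) : ℝ := t ^ 2 * log (cosh (r / t))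

noncomputable def coshSlope (t r : ℝ) : ℝ := t * tanh (r / t)

theorem hasDerivAt_reaperProfile (hc : c ≠ 0) {x : ℝ} (hx : cos (x * c) ≠ 0) :
    HasDerivAt (reaperProfile c) (reaperSlope c x) x := by
  have h := ((hasDerivAt_mul_const c).cos.log hx).const_mul (-(1 / c) ^ 2)
  refine h.congr_deriv ?_
  rw [reaperSlope, tan_eq_sin_div_cos]
  field_simp

theorem eventually_hasDerivAt_reaperProfile (hc : c ≠ 0) {x : ℝ} (hx : cos (x * c) ≠ 0) :
    ∀ᶠ y in nhds x, HasDerivAt (reaperProfile c) (reaperSlope c y) y :=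
  ((continuous_cos.comp (continuous_mul_const c)).continuousAt.eventually_ne hx).mono
    fun _ hy => hasDerivAt_reaperProfile hc hy

theorem hasDerivAt_reaperSlope (hc : c ≠ 0) {x : ℝ} (hx : cos (x * c) ≠ 0) :
    HasDerivAt (reaperSlope c) (1 + c ^ 2 * reaperSlope c x ^ 2) x := by
  have h := ((hasDerivAt_tan hx).comp x (hasDerivAt_mul_const c)).div_const c
  refine h.congr_deriv ?_
  rw [reaperSlope, tan_eq_sin_div_cos]
  field_simp
  linear_combination -sin_sq_add_cos_sq (x * c)

theorem hasDerivAt_coshProfile (ht : t ≠ 0) (r : ℝ) :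
    HasDerivAt (coshProfile t) (coshSlope t r) r := by
  have h := (((hasDerivAt_id' r).div_const t).cosh.log (cosh_pos _).ne').const_mul (t ^ 2)
  refine h.congr_deriv ?_
  rw [coshSlope, tanh_eq_sinh_div_cosh]
  field_simp

theorem hasDerivAt_coshSlope (ht : t ≠ 0) (r : ℝ) :
    HasDerivAt (coshSlope t) (1 - coshSlope t r ^ 2 / t ^ 2) r := by
  have hd := (hasDerivAt_id' r).div_const t
  have h := (hd.sinh.div hd.cosh (cosh_pos _).ne').const_mul t
  unfold coshSlope
  simp only [tanh_eq_sinh_div_cosh]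
  refine h.congr_deriv ?_
  field_simp

theorem cos_mul_pos_of_abs_lt (hc : 0 < c) {x : ℝ} (hx : |x| < π / 2 * (1 / c)) :
    0 < cos (x * c) := by
  refine cos_pos_of_mem_Ioo (abs_lt.1 ?_)
  rwa [abs_mul, abs_of_pos hc, ← lt_div_iff₀ hc, div_eq_mul_one_div]

theorem coshSlope_nonneg (ht : 0 < t) {r : ℝ} (hr : 0 ≤ r) : 0 ≤ coshSlope t r := by
  rw [coshSlope, tanh_eq_sinh_div_cosh]
  have : 0 ≤ sinh (r / t) := sinh_nonneg_iff.2 (by positivity)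
  have := cosh_pos (r / t)
  positivity

theorem coshSlope_sq_lt (ht : t ≠ 0) (r : ℝ) : coshSlope t r ^ 2 < t ^ 2 := by
  rw [coshSlope, mul_pow]
  exact mul_lt_of_lt_one_right (by positivity) (tanh_sq_lt_one _)

theorem cos_sq_mul_one_add_tan_sq {θ : ℝ} (hθ : cos θ ≠ 0) : cos θ ^ 2 * (1 + tan θ ^ 2) = 1 := by
  rw [← inv_one_add_tan_sq hθ]
  exact inv_mul_cancel₀ (by positivity)

end Profiles

theorem one_add_le_of_riccati {m a b r c t : ℝ} (hm : 2 ≤ m)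
    (hct : c ^ 2 * (1 + t ^ 2) = 1) (ht : t ≠ 0) (hr : 0 < r) (hb : 0 ≤ b) (hbt : b ^ 2 < t ^ 2) :
    1 + (a ^ 2 + b ^ 2) ≤
      (1 + (a ^ 2 + b ^ 2)) * ((1 + c ^ 2 * a ^ 2) + (1 - b ^ 2 / t ^ 2) + (m - 2) * (b / r)) -
        ((1 + c ^ 2 * a ^ 2) * a ^ 2 + (1 - b ^ 2 / t ^ 2) * b ^ 2) := by
  have hc2 : c ^ 2 = 1 / (1 + t ^ 2) := by field_simp; linarith
  -- the `a² b²` terms cancel exactly because `c² (1 + t²) = 1`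
  have hdefect : (1 + (a ^ 2 + b ^ 2)) * ((1 + c ^ 2 * a ^ 2) + (1 - b ^ 2 / t ^ 2)) -
      ((1 + c ^ 2 * a ^ 2) * a ^ 2 + (1 - b ^ 2 / t ^ 2) * b ^ 2) - (1 + (a ^ 2 + b ^ 2)) =
      (1 + c ^ 2 * a ^ 2) * (1 - b ^ 2 / t ^ 2) := by
    rw [hc2]
    field_simp
    ring
  have hβ : 0 < 1 - b ^ 2 / t ^ 2 := by
    rw [sub_pos, div_lt_one (by positivity)]
    exact hbt
  have hφ : 0 ≤ (m - 2) * (b / r) * (1 + (a ^ 2 + b ^ 2)) := by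
    have : 0 ≤ m - 2 := by linarith
    positivity
  linarith [hdefect, hφ, mul_pos (by positivity : (0:ℝ) < 1 + c ^ 2 * a ^ 2) hβ]

theorem inv_sqrt_le_eDiv_reaper_cosh {m : ℕ} (hm : 2 ≤ m) {e p : EuclideanSpace ℝ (Fin m)}
    (he : ‖e‖ = 1) {c t : ℝ} (hc : c ≠ 0) (ht : 0 < t) (hct : c ^ 2 * (1 + t ^ 2) = 1)
    (hx : cos (⟪e, p⟫ * c) ≠ 0) (hp : projPerp e p ≠ 0) :
    (√(1 + ‖axialField e (reaperSlope c) (coshSlope t) p‖ ^ 2))⁻¹ ≤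
      eDiv (fun q => (√(1 + ‖axialField e (reaperSlope c) (coshSlope t) q‖ ^ 2))⁻¹ •
        axialField e (reaperSlope c) (coshSlope t) q) p := by
  refine inv_sqrt_le_eDiv_of_le (hasFDerivAt_axialField he (hasDerivAt_reaperSlope hc hx)
    (hasDerivAt_coshSlope ht.ne' _) hp) ?_
  rw [one_add_norm_sq_mul_trace_sub_inner_axialField he hp, norm_axialField_sq he hp,
    finrank_euclideanSpace_fin]
  exact one_add_le_of_riccati (by exact_mod_cast hm) hct ht.ne' (norm_pos_iff.2 hp)
    (coshSlope_nonneg ht (norm_nonneg _)) (coshSlope_sq_lt ht.ne' _)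

/-- for θ ∈ (0,π/2) and any point (x,y) with |x| < (π/2)secθ and y ≠ 0, the
function `u(x,y) = -sec²θ·log(cos(x/secθ)) + tan²θ·log(cosh(|y|/tanθ))` satisfies
`H[u] ≥ 1/√(1+|Du|²)` where `H[u] = div(Du/√(1+|Du|²))`; i.e. `u` is a subsolution of the
graphical translator equation. (Here `x/secθ = x·cosθ`, the first coordinate is `p 0`, and
`|y|` is the norm of the remaining coordinates.) -/
theorem grim_oval_subsolution (n : ℕ) (hn : 2 ≤ n) (θ : ℝ)
    (hθ : θ ∈ Set.Ioo 0 (Real.pi / 2))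
    (u : EuclideanSpace ℝ (Fin n) → ℝ)
    (hu : ∀ p : EuclideanSpace ℝ (Fin n),
      u p = -(1 / Real.cos θ) ^ 2 * Real.log (Real.cos (p ⟨0, by omega⟩ * Real.cos θ))
        + (Real.tan θ) ^ 2 * Real.log (Real.cosh
            (Real.sqrt (∑ i : Fin n, if (i : ℕ) = 0 then 0 else (p i) ^ 2) / Real.tan θ)))
    (p : EuclideanSpace ℝ (Fin n))
    (hp : |p ⟨0, by omega⟩| < (Real.pi / 2) * (1 / Real.cos θ))
    (hy : ∃ i : Fin n, (i : ℕ) ≠ 0 ∧ p i ≠ 0) :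
    eDiv (fun q => (Real.sqrt (1 + ‖gradient u q‖ ^ 2))⁻¹ • gradient u q) p
      ≥ (Real.sqrt (1 + ‖gradient u p‖ ^ 2))⁻¹ := by
  obtain ⟨hθ0, hθ1⟩ := hθ
  have hc : 0 < cos θ := cos_pos_of_mem_Ioo ⟨by linarith [pi_pos], hθ1⟩
  have ht : 0 < tan θ := tan_pos_of_pos_of_lt_pi_div_two hθ0 hθ1
  set e : EuclideanSpace ℝ (Fin n) := EuclideanSpace.single ⟨0, by omega⟩ 1
  have he : ‖e‖ = 1 := by simp [e]
  have hx : ∀ q : EuclideanSpace ℝ (Fin n), ⟪e, q⟫ = q ⟨0, by omega⟩ := fun q => by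
    simp [e, EuclideanSpace.inner_single_left]
  have hu_eq : u = fun q => reaperProfile (cos θ) ⟪e, q⟫ + coshProfile (tan θ) ‖projPerp e q‖ := by
    funext q
    rw [hu q, hx, norm_projPerp_single_zero, reaperProfile, coshProfile]
  have hcos : cos (⟪e, p⟫ * cos θ) ≠ 0 := (cos_mul_pos_of_abs_lt hc (hx p ▸ hp)).ne'
  obtain ⟨i, hi, hpi⟩ := hy
  have hy0 : projPerp e p ≠ 0 := projPerp_single_ne_zero (fun h => hi (by rw [h])) hpi
  have hGu := gradient_eventuallyEq_axialField he (eventually_hasDerivAt_reaperProfile hc.ne' hcos)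
    (.of_forall (hasDerivAt_coshProfile ht.ne')) hy0
  rw [← hu_eq] at hGu
  rw [ge_iff_le, hGu.eq_of_nhds]
  exact (inv_sqrt_le_eDiv_reaper_cosh hn he hc.ne' ht (cos_sq_mul_one_add_tan_sq hc.ne') hcos
    hy0).trans_eq (hGu.fun_comp fun v => (√(1 + ‖v‖ ^ 2))⁻¹ • v).eDiv_eq.symm
end

section
/- For θ ∈ (0, π/2), the function g(w) = cosh(√w / tanθ) defined for w > 0 is log-concave, i.e. w ↦ log(cosh(√w/tanθ)) is concave on (0,∞). -/
/-!
Writing `φ(s) = tanh s / s`, the derivative of `w ↦ log (cosh √w)` on `(0, ∞)` is `φ(√w) / 2`.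
Since `s ≤ sinh s * cosh s` for `s ≥ 0`, `φ` is antitone on `(0, ∞)`, so this derivative is
antitone and `w ↦ log (cosh √w)` is concave. Finally `cosh (√w / a) = cosh √(w / a ^ 2)`,
and precomposing with a linear map preserves concavity.
-/

open Real Set

lemma Real.hasDerivAt_tanh (x : ℝ) : HasDerivAt tanh (1 / cosh x ^ 2) x := by
  have h := (hasDerivAt_sinh x).div (hasDerivAt_cosh x) (cosh_pos x).ne'
  rw [show sinh / cosh = tanh from funext fun y => (tanh_eq_sinh_div_cosh y).symm] at h
  refine h.congr_deriv ?_
  rw [one_div, ← one_div, ← cosh_sq_sub_sinh_sq x]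
  ring

lemma Real.self_le_sinh_mul_cosh {x : ℝ} (hx : 0 ≤ x) : x ≤ sinh x * cosh x :=
  (self_le_sinh_iff.2 hx).trans <| le_mul_of_one_le_right (sinh_nonneg_iff.2 hx) (one_le_cosh x)

lemma hasDerivAt_tanh_div_self {s : ℝ} (hs : s ≠ 0) :
    HasDerivAt (fun s => tanh s / s) ((s - sinh s * cosh s) / (s * cosh s) ^ 2) s := by
  refine ((hasDerivAt_tanh s).div (hasDerivAt_id s) hs).congr_deriv ?_
  have hc := (cosh_pos s).ne'
  rw [tanh_eq_sinh_div_cosh, id]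
  field_simp

lemma antitoneOn_tanh_div_self : AntitoneOn (fun s => tanh s / s) (Ioi 0) := by
  refine antitoneOn_of_deriv_nonpos (convex_Ioi 0)
    (fun s hs => (hasDerivAt_tanh_div_self (ne_of_gt hs)).continuousAt.continuousWithinAt)
    (fun s hs => (hasDerivAt_tanh_div_self (ne_of_gt (interior_subset hs))).differentiableAt
      |>.differentiableWithinAt) fun s hs => ?_
  rw [interior_Ioi] at hs
  rw [(hasDerivAt_tanh_div_self (ne_of_gt hs)).deriv]
  exact div_nonpos_of_nonpos_of_nonneg (sub_nonpos.2 (self_le_sinh_mul_cosh hs.le)) (sq_nonneg _)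

lemma hasDerivAt_log_cosh_sqrt {w : ℝ} (hw : 0 < w) :
    HasDerivAt (fun w => log (cosh √w)) (tanh √w / √w / 2) w := by
  refine ((hasDerivAt_sqrt hw.ne').cosh.log (cosh_pos _).ne').congr_deriv ?_
  have hs := (sqrt_pos.2 hw).ne'
  rw [tanh_eq_sinh_div_cosh]
  field_simp

theorem concaveOn_log_cosh_sqrt : ConcaveOn ℝ (Ici 0) fun w => log (cosh √w) := by
  refine AntitoneOn.concaveOn_of_deriv (convex_Ici 0)
    (ContinuousOn.log (by fun_prop) fun w _ => (cosh_pos _).ne') ?_ ?_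
  · rw [interior_Ici]
    exact fun w hw => (hasDerivAt_log_cosh_sqrt hw).differentiableAt.differentiableWithinAt
  · rw [interior_Ici]
    intro x hx y hy hxy
    rw [(hasDerivAt_log_cosh_sqrt hx).deriv, (hasDerivAt_log_cosh_sqrt hy).deriv]
    exact div_le_div_of_nonneg_right
      (antitoneOn_tanh_div_self (sqrt_pos.2 hx) (sqrt_pos.2 hy) (sqrt_le_sqrt hxy)) two_pos.le

lemma Real.cosh_sqrt_div (w a : ℝ) : cosh (√w / a) = cosh √((a ^ 2)⁻¹ * w) := by
  rw [sqrt_mul (inv_nonneg.2 (sq_nonneg a)), sqrt_inv, sqrt_sq_eq_abs, ← cosh_abs (√w / a),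
    abs_div, abs_of_nonneg (sqrt_nonneg w), inv_mul_eq_div]

theorem logConcave_cosh_sqrt_general (θ : ℝ) :
    ConcaveOn ℝ (Set.Ioi (0 : ℝ))
      (fun w : ℝ => Real.log (Real.cosh (Real.sqrt w / Real.tan θ))) := by
  have hsub : Ioi 0 ⊆ LinearMap.mulLeft ℝ (tan θ ^ 2)⁻¹ ⁻¹' Ici 0 := fun w hw => by
    simp only [mem_preimage, LinearMap.mulLeft_apply, mem_Ici]
    exact mul_nonneg (by positivity) (le_of_lt hw)
  refine ((concaveOn_log_cosh_sqrt.comp_linearMap _).subset hsub (convex_Ioi 0)).congr ?_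
  intro w _
  simp only [Function.comp_apply, LinearMap.mulLeft_apply, cosh_sqrt_div]

/-- for θ ∈ (0, π/2), the function `g(w) = cosh(√w / tanθ)` is log-concave on
`(0,∞)`, i.e. `w ↦ log(cosh(√w/tanθ))` is concave there. -/
theorem logConcave_cosh_sqrt (θ : ℝ) (hθ : θ ∈ Set.Ioo 0 (Real.pi / 2)) :
    ConcaveOn ℝ (Set.Ioi (0 : ℝ))
      (fun w : ℝ => Real.log (Real.cosh (Real.sqrt w / Real.tan θ))) :=
  logConcave_cosh_sqrt_general θ
end

section
/- Fix n ≥ 2 and θ ∈ (0, π/2). There exists ε₀ = ε₀(n,θ) > 0 such that for all ε ∈ (0, ε₀) and all R > 2(n-1)/ε, the following holds: if |z| ≥ R·cos(θ-ε)/sinθ and |y|² + z² ≤ R²/sin²θ (so that |y| ≤ R·sin(θ-ε)/sinθ), then ((|z| - (n-1))/√(|y|²+z²)) · tanh(√(|y|²+z²)/secθ) ≥ cosθ. -/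
/-!
Write `δ = ε sin θ`. For `ε ≤ sin θ / 4` the rotation gains `cos (θ - ε) ≥ cos θ + 5δ/8`; since
`n - 1 < Rε/2`, on the region this gives `|z| - (n - 1) ≥ (cos θ + δ/8) R / sin θ`, and `R / sin θ`
bounds `√(y² + z²)`, so the first factor is at least `cos θ + δ/8`. The same bounds make
`√(y² + z²) cos θ ≥ 2 cos² θ / δ` large, and `tanh x ≥ 1 - 1/x²` turns this into
`tanh ≥ 1 - δ/16` once `4δ ≤ cos⁴ θ`. Finally `(cos θ + δ/8)(1 - δ/16) ≥ cos θ` for `δ ≤ 1/4`.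
-/

open Real

theorem one_sub_one_div_sq_le_tanh {x : ℝ} (hx : 0 < x) : 1 - 1 / x ^ 2 ≤ tanh x := by
  have hexp : 2 * x ^ 2 ≤ exp x ^ 2 + 1 := by
    have := quadratic_le_exp_of_nonneg (by positivity : 0 ≤ 2 * x)
    rw [← exp_nat_mul]
    push_cast
    nlinarith
  have htanh : tanh x = 1 - 2 / (exp x ^ 2 + 1) := by
    rw [tanh_eq, exp_neg]
    field_simp
    ring
  rw [htanh, sub_le_sub_iff_left, div_le_div_iff₀ (by positivity) (by positivity)]
  linarith

theorem one_sub_div_sixteen_le_tanh {x δ c : ℝ} (hδ : 0 < δ) (hδc : 4 * δ ≤ c ^ 4)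
    (hx : 2 * c ^ 2 ≤ x * δ) : 1 - δ / 16 ≤ tanh x := by
  have hc : 0 < c ^ 2 := by nlinarith [sq_nonneg (c ^ 2)]
  have hx₀ : 0 < x := pos_of_mul_pos_left (by linarith) hδ.le
  calc 1 - δ / 16 ≤ 1 - 1 / x ^ 2 := by
        rw [sub_le_sub_iff_left, div_le_div_iff₀ (by positivity) (by norm_num)]
        nlinarith [mul_le_mul hx hx (by positivity) (by positivity)]
    _ ≤ tanh x := one_sub_one_div_sq_le_tanh hx₀

theorem cos_add_mul_sin_le_cos_sub {θ ε : ℝ} (hε : 0 < ε) (hεs : ε ≤ sin θ / 4)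
    (hc : 0 ≤ cos θ) : cos θ + 5 / 8 * (ε * sin θ) ≤ cos (θ - ε) := by
  have hs : 4 * ε ≤ sin θ := by linarith
  have hcos : cos θ - ε ^ 2 / 2 ≤ cos θ * cos ε := by
    nlinarith [one_sub_sq_div_two_le_cos (x := ε), cos_le_one θ]
  have hsin : 3 / 4 * ε ≤ sin ε := by
    nlinarith [sin_gt_sub_cube hε, sin_le_one θ]
  rw [cos_sub]
  nlinarith [mul_le_mul_of_nonneg_left hsin (by linarith : 0 ≤ sin θ)]

theorem add_le_sub_div_sqrt {θ ε R m y z : ℝ} (hs : 0 < sin θ) (hc : 0 ≤ cos θ) (hε : 0 < ε)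
    (hm : 0 ≤ m) (hRε : 2 * m < R * ε) (hcos : cos θ + 5 / 8 * (ε * sin θ) ≤ cos (θ - ε))
    (hz : R * cos (θ - ε) / sin θ ≤ |z|) (hyz : y ^ 2 + z ^ 2 ≤ R ^ 2 / sin θ ^ 2) :
    cos θ + ε * sin θ / 8 ≤ (|z| - m) / √(y ^ 2 + z ^ 2) := by
  have hR : 0 < R := pos_of_mul_pos_left (by linarith) hε.le
  rw [div_le_iff₀ hs] at hz
  have hzm : R * (cos θ + ε * sin θ / 8) ≤ sin θ * (|z| - m) := by nlinarith
  have hr : √(y ^ 2 + z ^ 2) ≤ R / sin θ := by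
    rw [← sqrt_sq (by positivity : 0 ≤ R / sin θ), div_pow]
    exact sqrt_le_sqrt hyz
  have hz₀ : 0 < |z| := by nlinarith [mul_pos hR (by positivity : 0 < ε * sin θ)]
  have hr₀ : 0 < √(y ^ 2 + z ^ 2) := hz₀.trans_le (abs_le_sqrt (by nlinarith [sq_nonneg y]))
  rw [le_div_iff₀ hr₀]
  calc (cos θ + ε * sin θ / 8) * √(y ^ 2 + z ^ 2) ≤ (cos θ + ε * sin θ / 8) * (R / sin θ) := by
        gcongr
    _ ≤ |z| - m := by rw [mul_div_assoc', div_le_iff₀ hs]; linarith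

theorem one_sub_le_tanh_sqrt_mul_cos {θ ε R m y z : ℝ} (hs : 0 < sin θ) (hc : 0 < cos θ)
    (hε : 0 < ε) (hεc : 4 * (ε * sin θ) ≤ cos θ ^ 4) (hm : 1 ≤ m) (hRε : 2 * m < R * ε)
    (hcos : cos θ ≤ cos (θ - ε)) (hz : R * cos (θ - ε) / sin θ ≤ |z|) :
    1 - ε * sin θ / 16 ≤ tanh (√(y ^ 2 + z ^ 2) * cos θ) := by
  refine one_sub_div_sixteen_le_tanh (by positivity) hεc ?_
  have hR : 0 < R := pos_of_mul_pos_left (by linarith) hε.le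
  rw [div_le_iff₀ hs] at hz
  have hzr : |z| ≤ √(y ^ 2 + z ^ 2) := abs_le_sqrt (by nlinarith [sq_nonneg y])
  have hr : 2 * cos θ ≤ √(y ^ 2 + z ^ 2) * (ε * sin θ) :=
    calc 2 * cos θ ≤ R * ε * cos θ := by gcongr; linarith
      _ ≤ ε * (R * cos (θ - ε)) := by nlinarith
      _ ≤ ε * (|z| * sin θ) := by gcongr
      _ ≤ √(y ^ 2 + z ^ 2) * (ε * sin θ) := by
        nlinarith [mul_le_mul_of_nonneg_right hzr (by positivity : 0 ≤ ε * sin θ)]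
  nlinarith

/-- the quantitative supersolution condition for the rotated Angenent oval
barrier. For every n ≥ 2, θ ∈ (0,π/2) there is ε₀ > 0 such that for ε ∈ (0,ε₀) and
R > 2(n-1)/ε: whenever |z| ≥ R·cos(θ-ε)/sinθ and y² + z² ≤ R²/sin²θ (so that
|y| ≤ R·sin(θ-ε)/sinθ), one has
`((|z| - (n-1))/√(y²+z²))·tanh(√(y²+z²)/secθ) ≥ cosθ`  (note `1/secθ = cosθ`). -/
theorem angenent_oval_supersolution (n : ℕ) (hn : 2 ≤ n) (θ : ℝ)
    (hθ : θ ∈ Set.Ioo 0 (Real.pi / 2)) :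
    ∃ ε₀ > (0 : ℝ), ∀ ε ∈ Set.Ioo 0 ε₀, ∀ R : ℝ, 2 * ((n : ℝ) - 1) / ε < R →
      ∀ y z : ℝ, R * Real.cos (θ - ε) / Real.sin θ ≤ |z| →
        y ^ 2 + z ^ 2 ≤ R ^ 2 / Real.sin θ ^ 2 →
        Real.cos θ ≤
          (|z| - ((n : ℝ) - 1)) / Real.sqrt (y ^ 2 + z ^ 2)
            * Real.tanh (Real.sqrt (y ^ 2 + z ^ 2) * Real.cos θ) := by
  obtain ⟨hθ₀, hθ₁⟩ := hθ
  have hs : 0 < sin θ := sin_pos_of_pos_of_lt_pi hθ₀ (by linarith [pi_pos])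
  have hc : 0 < cos θ := cos_pos_of_mem_Ioo ⟨by linarith [pi_pos], hθ₁⟩
  refine ⟨min (sin θ / 4) (cos θ ^ 4 / (4 * sin θ)), by positivity, ?_⟩
  rintro ε ⟨hε, hεε₀⟩ R hR y z hz hyz
  have hεs : ε ≤ sin θ / 4 := hεε₀.le.trans (min_le_left _ _)
  have hεc : 4 * (ε * sin θ) ≤ cos θ ^ 4 := by
    have := hεε₀.le.trans (min_le_right _ _)
    rw [le_div_iff₀ (by positivity)] at this
    linarith
  have hm : (1 : ℝ) ≤ n - 1 := by
    have : (2 : ℝ) ≤ n := by exact_mod_cast hn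
    linarith
  have hRε : 2 * ((n : ℝ) - 1) < R * ε := (div_lt_iff₀ hε).1 hR
  have hcos := cos_add_mul_sin_le_cos_sub hε hεs hc.le
  have hratio := add_le_sub_div_sqrt hs hc.le hε (by linarith) hRε hcos hz hyz
  have htanh := one_sub_le_tanh_sqrt_mul_cos (y := y) hs hc hε hεc hm hRε
    (by linarith [mul_pos hε hs]) hz
  have hδ : ε * sin θ ≤ 1 / 4 := by linarith [pow_le_one₀ hc.le (cos_le_one θ) (n := 4)]
  calc cos θ ≤ (cos θ + ε * sin θ / 8) * (1 - ε * sin θ / 16) := by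
        nlinarith [cos_le_one θ, mul_pos hε hs]
    _ ≤ _ := mul_le_mul hratio htanh (by linarith) (by linarith [mul_pos hε hs])
end
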